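/- Let C_S4.4 be the class of all finite Kripke models whose frame consists of a world x and a nonempty finite set C with x∉C, where the accessibility relation R is the reflexive relation with C×C ⊆ R and x R y for every world y, and no other pairs (a root x below a single cluster C of final worlds). Then C_S4.4 enjoys 2-IP. -/

import Mathlib

/-- Modal formulas over countably many variables. -/
inductive ModalForm : Type where
  | var : ℕ → ModalForm
  | bot : ModalForm
  | and : ModalForm → ModalForm → ModalForm
  | or : ModalForm → ModalForm → ModalForm
  | not : ModalForm → ModalForm
  | imp : ModalForm → ModalForm → ModalForm
  | box : ModalForm → ModalForm

namespace ModalForm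

mutual
  /-- positively occurring variables -/
  def vpos : ModalForm → Finset ℕ
    | var p => {p}
    | bot => ∅
    | and φ ψ => vpos φ ∪ vpos ψ
    | or φ ψ => vpos φ ∪ vpos ψ
    | not φ => vneg φ
    | imp φ ψ => vneg φ ∪ vpos ψ
    | box φ => vpos φ
  /-- negatively occurring variables -/
  def vneg : ModalForm → Finset ℕ
    | var _ => ∅
    | bot => ∅
    | and φ ψ => vneg φ ∪ vneg ψ
    | or φ ψ => vneg φ ∪ vneg ψ
    | not φ => vpos φ
    | imp φ ψ => vpos φ ∪ vneg ψ
    | box φ => vneg φ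
end

/-- Modal depth: maximal nesting of `□`. -/
def depth : ModalForm → ℕ
  | var _ => 0
  | bot => 0
  | and φ ψ => max (depth φ) (depth ψ)
  | or φ ψ => max (depth φ) (depth ψ)
  | not φ => depth φ
  | imp φ ψ => max (depth φ) (depth ψ)
  | box φ => depth φ + 1

/-- `◇φ := ¬□¬φ` -/
def dia (φ : ModalForm) : ModalForm := not (box (not φ))

/-- `⊤ := ¬⊥` -/
def top : ModalForm := not bot

end ModalForm

/-- An S4 Kripke frame: nonempty set of worlds with a reflexive transitive relation. -/
structure KFrame : Type 1 where
  W : Type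
  R : W → W → Prop
  nonempty : Nonempty W
  refl : ∀ x, R x x
  trans : ∀ x y z, R x y → R y z → R x z

/-- A Kripke model: a frame with a valuation. -/
structure KModel : Type 1 extends KFrame where
  val : W → ℕ → Prop

/-- The model based on frame `F` with valuation `V`. -/
def KFrame.toModel (F : KFrame) (V : F.W → ℕ → Prop) : KModel :=
  { toKFrame := F, val := V }

/-- Satisfaction in a Kripke model. -/
def KModel.Sat (M : KModel) : M.W → ModalForm → Prop
  | w, .var p => M.val w p
  | _, .bot => False
  | w, .and φ ψ => M.Sat w φ ∧ M.Sat w ψ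
  | w, .or φ ψ => M.Sat w φ ∨ M.Sat w ψ
  | w, .not φ => ¬ M.Sat w φ
  | w, .imp φ ψ => M.Sat w φ → M.Sat w ψ
  | w, .box φ => ∀ y, M.R w y → M.Sat y φ

/-- `(M0,w0) →ₙ^{(P⁺,P⁻)} (M1,w1)`: every `(P⁺,P⁻)`-formula of depth ≤ n
satisfied at `(M0,w0)` is satisfied at `(M1,w1)`. -/
def ModalArrow (Pp Pm : Finset ℕ) (n : ℕ) (M0 : KModel) (w0 : M0.W)
    (M1 : KModel) (w1 : M1.W) : Prop :=
  ∀ φ : ModalForm, φ.vpos ⊆ Pp → φ.vneg ⊆ Pm → φ.depth ≤ n →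
    M0.Sat w0 φ → M1.Sat w1 φ

/-- p-morphism between frames. -/
def PMorphism (F G : KFrame) (f : F.W → G.W) : Prop :=
  (∀ x y, F.R x y → G.R (f x) (f y)) ∧
  (∀ x w, G.R (f x) w → ∃ z, F.R x z ∧ f z = w)

/-- The class `C` of Kripke models enjoys `n`-IP. -/
def EnjoysIP (C : Set KModel) (n : ℕ) : Prop :=
  ∀ (Pp Pm : Finset ℕ) (M0 M1 : KModel), M0 ∈ C → M1 ∈ C →
    ∀ (w0 : M0.W) (w1 : M1.W), ModalArrow Pp Pm n M0 w0 M1 w1 →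
      ∃ (F : KFrame) (wstar : F.W) (f0 : F.W → M0.W) (f1 : F.W → M1.W),
        (∀ V : F.W → ℕ → Prop, F.toModel V ∈ C) ∧
        PMorphism F M0.toKFrame f0 ∧
        PMorphism F M1.toKFrame f1 ∧
        f0 wstar = w0 ∧ f1 wstar = w1 ∧
        ∀ x : F.W, ModalArrow Pp Pm 0 M0 (f0 x) M1 (f1 x)

/-- A world is final iff every successor is also a predecessor. -/
def KModel.Final (M : KModel) (w : M.W) : Prop := ∀ y, M.R w y → M.R y w

/-- The cluster of a world. -/
def KModel.cluster (M : KModel) (w : M.W) : Set M.W := {u | M.R w u ∧ M.R u w}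

/-- Cluster `C0` of `M0` matches cluster `C1` of `M1`. -/
def Matches (Pp Pm : Finset ℕ) (M0 M1 : KModel) (C0 : Set M0.W) (C1 : Set M1.W) : Prop :=
  (∀ u0 ∈ C0, ∃ u1 ∈ C1, ModalArrow Pp Pm 0 M0 u0 M1 u1) ∧
  (∀ u1 ∈ C1, ∃ u0 ∈ C0, ModalArrow Pp Pm 0 M0 u0 M1 u1)

/-- `φ` is satisfied at every world of every model in `C`. -/
def ValidOn (C : Set KModel) (φ : ModalForm) : Prop :=
  ∀ M ∈ C, ∀ w : M.W, M.Sat w φ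

/-- The class of S4.4 models: a root `x` below a single nonempty finite cluster `C`. -/
def C_S44 : Set KModel :=
  {M | Finite M.W ∧ ∃ (x : M.W) (C : Set M.W), x ∉ C ∧ C.Nonempty ∧
    (∀ w : M.W, w = x ∨ w ∈ C) ∧
    ∀ u v : M.W, M.R u v ↔ (u = v ∨ (u ∈ C ∧ v ∈ C) ∨ u = x)}

/-!
A depth-0 `(P⁺,P⁻)`-formula is preserved from `u₀` to `u₁` exactly when the variables of `P⁺`
true at `u₀` are true at `u₁` and those of `P⁻` true at `u₁` are true at `u₀`; this is expressed by
a characteristic formula `χ(u₀)`. For `u₀` in the final cluster `C₀`, `□◇χ(u₀)` has depth 2 and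
holds at `w₀`, so it holds at `w₁`, and since `C₁` is final, some `u₁ ∈ C₁` satisfies `χ(u₀)`.
Arrows can be reversed by negating formulas and swapping `P⁺` with `P⁻`, so symmetrically
every `u₁ ∈ C₁` is matched by some `u₀ ∈ C₀`. The frame `F*` is a root below the cluster of matched
pairs, mapped to `w₀, w₁` and to the two projections.
-/

namespace ModalForm

def conj : List ModalForm → ModalForm
  | [] => top
  | φ :: l => and φ (conj l)

theorem vpos_conj_subset {S : Finset ℕ} :
    ∀ {l : List ModalForm}, (∀ φ ∈ l, φ.vpos ⊆ S) → (conj l).vpos ⊆ S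
  | [], _ => by simp [conj, top, vpos, vneg]
  | φ :: l, h => by
    simp only [List.mem_cons, forall_eq_or_imp] at h
    exact Finset.union_subset h.1 (vpos_conj_subset h.2)

theorem vneg_conj_subset {S : Finset ℕ} :
    ∀ {l : List ModalForm}, (∀ φ ∈ l, φ.vneg ⊆ S) → (conj l).vneg ⊆ S
  | [], _ => by simp [conj, top, vpos, vneg]
  | φ :: l, h => by
    simp only [List.mem_cons, forall_eq_or_imp] at h
    exact Finset.union_subset h.1 (vneg_conj_subset h.2)

theorem depth_conj_le {n : ℕ} :
    ∀ {l : List ModalForm}, (∀ φ ∈ l, φ.depth ≤ n) → (conj l).depth ≤ n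
  | [], _ => by simp [conj, top, depth]
  | φ :: l, h => by
    simp only [List.mem_cons, forall_eq_or_imp] at h
    simpa [conj, depth] using ⟨h.1, depth_conj_le h.2⟩

end ModalForm

open ModalForm

namespace KModel

theorem sat_conj (M : KModel) (w : M.W) (l : List ModalForm) :
    M.Sat w (conj l) ↔ ∀ φ ∈ l, M.Sat w φ := by
  induction l with
  | nil => simp [conj, top, Sat]
  | cons φ l ih => simp [conj, Sat, ih]

theorem sat_dia (M : KModel) (w : M.W) (φ : ModalForm) :
    M.Sat w (dia φ) ↔ ∃ y, M.R w y ∧ M.Sat y φ := by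
  simp [dia, Sat]

end KModel

theorem ModalArrow.mono {Pp Pm : Finset ℕ} {m n : ℕ} {M0 M1 : KModel} {w0 : M0.W} {w1 : M1.W}
    (h : ModalArrow Pp Pm n M0 w0 M1 w1) (hmn : m ≤ n) : ModalArrow Pp Pm m M0 w0 M1 w1 :=
  fun φ hp hn hd => h φ hp hn (hd.trans hmn)

theorem ModalArrow.swap {Pp Pm : Finset ℕ} {n : ℕ} {M0 M1 : KModel} {w0 : M0.W} {w1 : M1.W}
    (h : ModalArrow Pp Pm n M0 w0 M1 w1) : ModalArrow Pm Pp n M1 w1 M0 w0 := by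
  intro φ hp hn hd h1
  by_contra h0
  exact h (not φ) hn hp hd h0 h1

def AtomArrow (Pp Pm : Finset ℕ) (M0 : KModel) (u0 : M0.W) (M1 : KModel) (u1 : M1.W) : Prop :=
  (∀ p ∈ Pp, M0.val u0 p → M1.val u1 p) ∧ (∀ p ∈ Pm, M1.val u1 p → M0.val u0 p)

namespace AtomArrow

variable {Pp Pm : Finset ℕ} {M0 M1 : KModel} {u0 : M0.W} {u1 : M1.W}

theorem swap (h : AtomArrow Pp Pm M0 u0 M1 u1) : AtomArrow Pm Pp M1 u1 M0 u0 :=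
  ⟨h.2, h.1⟩

theorem sat_of_sat (φ : ModalForm) (hd : φ.depth = 0) :
    ∀ {Pp Pm : Finset ℕ} {M0 M1 : KModel} {u0 : M0.W} {u1 : M1.W},
      φ.vpos ⊆ Pp → φ.vneg ⊆ Pm → AtomArrow Pp Pm M0 u0 M1 u1 → M0.Sat u0 φ → M1.Sat u1 φ := by
  induction φ with
  | var p =>
    intro _ _ _ _ _ _ hp _ h
    exact h.1 p (hp (Finset.mem_singleton_self p))
  | bot => exact fun _ _ _ h => h
  | and φ ψ ihφ ihψ =>
    simp only [depth, Nat.max_eq_zero_iff] at hd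
    simp only [vpos, vneg, Finset.union_subset_iff]
    exact fun hp hn h hs => ⟨ihφ hd.1 hp.1 hn.1 h hs.1, ihψ hd.2 hp.2 hn.2 h hs.2⟩
  | or φ ψ ihφ ihψ =>
    simp only [depth, Nat.max_eq_zero_iff] at hd
    simp only [vpos, vneg, Finset.union_subset_iff]
    exact fun hp hn h hs => hs.imp (ihφ hd.1 hp.1 hn.1 h) (ihψ hd.2 hp.2 hn.2 h)
  | not φ ih =>
    simp only [vpos, vneg]
    exact fun hp hn h hs h1 => hs (ih hd hn hp h.swap h1)
  | imp φ ψ ihφ ihψ =>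
    simp only [depth, Nat.max_eq_zero_iff] at hd
    simp only [vpos, vneg, Finset.union_subset_iff]
    exact fun hp hn h hs h1 => ihψ hd.2 hp.2 hn.2 h (hs (ihφ hd.1 hn.1 hp.1 h.swap h1))
  | box φ _ => exact absurd hd (Nat.succ_ne_zero _)

theorem modalArrow_zero (h : AtomArrow Pp Pm M0 u0 M1 u1) : ModalArrow Pp Pm 0 M0 u0 M1 u1 :=
  fun φ hp hn hd => sat_of_sat φ (Nat.le_zero.1 hd) hp hn h

end AtomArrow

open Classical in
noncomputable def charForm (Pp Pm : Finset ℕ) (M : KModel) (u : M.W) : ModalForm :=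
  conj ((Pp.filter (M.val u)).toList.map var ++
    (Pm.filter (¬ M.val u ·)).toList.map (ModalForm.not ∘ var))

section charForm

variable (Pp Pm : Finset ℕ) (M : KModel) (u : M.W)

theorem vpos_charForm : (charForm Pp Pm M u).vpos ⊆ Pp := by
  refine vpos_conj_subset fun φ hφ => ?_
  simp only [List.mem_append, List.mem_map, Finset.mem_toList, Finset.mem_filter] at hφ
  rcases hφ with ⟨p, ⟨hp, _⟩, rfl⟩ | ⟨p, -, rfl⟩
  · simpa [vpos] using hp
  · simp [vpos, vneg]

theorem vneg_charForm : (charForm Pp Pm M u).vneg ⊆ Pm := by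
  refine vneg_conj_subset fun φ hφ => ?_
  simp only [List.mem_append, List.mem_map, Finset.mem_toList, Finset.mem_filter] at hφ
  rcases hφ with ⟨p, -, rfl⟩ | ⟨p, ⟨hp, _⟩, rfl⟩
  · simp [vneg]
  · simpa [vpos, vneg] using hp

theorem depth_charForm : (charForm Pp Pm M u).depth ≤ 0 := by
  refine depth_conj_le fun φ hφ => ?_
  simp only [List.mem_append, List.mem_map] at hφ
  rcases hφ with ⟨p, _, rfl⟩ | ⟨p, _, rfl⟩ <;> simp [depth]

theorem sat_charForm_iff {M' : KModel} {u' : M'.W} :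
    M'.Sat u' (charForm Pp Pm M u) ↔ AtomArrow Pp Pm M u M' u' := by
  simp only [charForm, KModel.sat_conj, List.mem_append, List.mem_map, Finset.mem_toList,
    Finset.mem_filter, AtomArrow]
  constructor
  · intro h
    refine ⟨fun p hp hv => h _ (.inl ⟨p, ⟨hp, hv⟩, rfl⟩), fun p hp hv => ?_⟩
    by_contra hnv
    exact h _ (.inr ⟨p, ⟨hp, hnv⟩, rfl⟩) hv
  · rintro ⟨h1, h2⟩ φ (⟨p, ⟨hp, hv⟩, rfl⟩ | ⟨p, ⟨hp, hv⟩, rfl⟩)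
    · exact h1 p hp hv
    · exact fun hv' => hv (h2 p hp hv')

theorem sat_charForm_self : M.Sat u (charForm Pp Pm M u) :=
  (sat_charForm_iff Pp Pm M u).2 ⟨fun _ _ => id, fun _ _ => id⟩

end charForm

theorem ModalArrow.exists_atomArrow {Pp Pm : Finset ℕ} {M0 M1 : KModel} {w0 u0 : M0.W}
    {w1 : M1.W} {C1 : Set M1.W} (h : ModalArrow Pp Pm 2 M0 w0 M1 w1)
    (hu0 : ∀ y, M0.R w0 y → M0.R y u0) (hC1 : ∃ c ∈ C1, M1.R w1 c)
    (hC1up : ∀ u v, u ∈ C1 → M1.R u v → v ∈ C1) :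
    ∃ u1 ∈ C1, AtomArrow Pp Pm M0 u0 M1 u1 := by
  have hsat : M1.Sat w1 (box (dia (charForm Pp Pm M0 u0))) := by
    refine h _ ?_ ?_ (by simpa [depth, dia] using depth_charForm Pp Pm M0 u0) ?_
    · simpa [vpos, vneg, dia] using vpos_charForm Pp Pm M0 u0
    · simpa [vpos, vneg, dia] using vneg_charForm Pp Pm M0 u0
    · exact fun y hy => (KModel.sat_dia _ _ _).2 ⟨u0, hu0 y hy, sat_charForm_self Pp Pm M0 u0⟩
  obtain ⟨c, hc, hwc⟩ := hC1
  obtain ⟨u1, hcu1, hu1⟩ := (KModel.sat_dia _ _ _).1 (hsat c hwc)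
  exact ⟨u1, hC1up c u1 hc hcu1, (sat_charForm_iff Pp Pm M0 u0).1 hu1⟩

def IsRootedCluster (M : KModel) (x : M.W) (C : Set M.W) : Prop :=
  x ∉ C ∧ (∀ w, w = x ∨ w ∈ C) ∧ ∀ u v, M.R u v ↔ (u = v ∨ (u ∈ C ∧ v ∈ C) ∨ u = x)

namespace IsRootedCluster

variable {M : KModel} {x : M.W} {C : Set M.W}

theorem rel_of_mem (hM : IsRootedCluster M x C) (u : M.W) {v : M.W} (hv : v ∈ C) : M.R u v :=
  (hM.2.2 u v).2 <| (hM.2.1 u).elim (fun hu => .inr (.inr hu)) fun hu => .inr (.inl ⟨hu, hv⟩)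

theorem mem_of_rel (hM : IsRootedCluster M x C) {u v : M.W} (hu : u ∈ C) (huv : M.R u v) :
    v ∈ C := by
  rcases (hM.2.2 u v).1 huv with rfl | ⟨_, hv⟩ | rfl
  exacts [hu, hv, absurd hu hM.1]

theorem eq_or_mem_of_rel (hM : IsRootedCluster M x C) {u v : M.W} (huv : M.R u v) :
    v = u ∨ v ∈ C := by
  rcases hM.2.1 u with rfl | hu
  · exact hM.2.1 v
  · exact .inr (hM.mem_of_rel hu huv)

theorem exists_atomArrow {Pp Pm : Finset ℕ} {M' : KModel} {x' : M'.W} {C' : Set M'.W}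
    (hM : IsRootedCluster M x C) (hM' : IsRootedCluster M' x' C') (hC' : C'.Nonempty)
    {w : M.W} {w' : M'.W} (h : ModalArrow Pp Pm 2 M w M' w') {u : M.W} (hu : u ∈ C) :
    ∃ u' ∈ C', AtomArrow Pp Pm M u M' u' :=
  h.exists_atomArrow (fun y _ => hM.rel_of_mem y hu)
    (hC'.imp fun _ hc => ⟨hc, hM'.rel_of_mem w' hc⟩) fun _ _ => hM'.mem_of_rel

end IsRootedCluster

/-- The root `none` below the cluster of all `some a`. -/
def rootedClusterFrame (α : Type) : KFrame where
  W := Option α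
  R a b := a = none ∨ b ≠ none
  nonempty := ⟨none⟩
  refl a := by cases a <;> simp
  trans _ b _ := by
    rintro (ha | hb) (hb' | hc)
    exacts [.inl ha, .inl ha, absurd hb' hb, .inr hc]

theorem rootedClusterFrame_rel_iff {α : Type} {a b : Option α} :
    (rootedClusterFrame α).R a b ↔ a = b ∨ (a ≠ none ∧ b ≠ none) ∨ a = none := by
  cases a <;> cases b <;> simp [rootedClusterFrame]

theorem rootedClusterFrame_toModel_mem (α : Type) [Finite α] [Nonempty α]
    (V : (rootedClusterFrame α).W → ℕ → Prop) : (rootedClusterFrame α).toModel V ∈ C_S44 :=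
  ⟨inferInstanceAs (Finite (Option α)), (none : Option α), {a : Option α | a ≠ none},
    fun h => h rfl, ⟨some (Classical.arbitrary α), Option.some_ne_none _⟩,
    fun a => (em (a = none)).imp_right id, fun _ _ => rootedClusterFrame_rel_iff⟩

theorem IsRootedCluster.pMorphism_elim {M : KModel} {x : M.W} {C : Set M.W}
    (hM : IsRootedCluster M x C) {α : Type} (w : M.W) {g : α → M.W} (hg : Set.range g = C) :
    PMorphism (rootedClusterFrame α) M.toKFrame (fun a => a.elim w g) := by
  have hgC : ∀ a, g a ∈ C := fun a => hg ▸ Set.mem_range_self a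
  have hlift : ∀ {v}, v ∈ C → ∃ b, g b = v := fun hv => by rwa [← hg] at hv
  constructor
  · rintro a (_ | b) (rfl | hb)
    · exact M.refl w
    · exact absurd rfl hb
    · exact hM.rel_of_mem _ (hgC b)
    · exact hM.rel_of_mem _ (hgC b)
  · rintro (_ | a) v hv
    · rcases hM.eq_or_mem_of_rel hv with rfl | hvC
      · exact ⟨none, .inl rfl, rfl⟩
      · obtain ⟨b, rfl⟩ := hlift hvC
        exact ⟨some b, .inl rfl, rfl⟩
    · obtain ⟨b, rfl⟩ := hlift (hM.mem_of_rel (hgC a) hv)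
      exact ⟨some b, .inr (Option.some_ne_none b), rfl⟩

theorem stmt11 : EnjoysIP C_S44 2 := by
  intro Pp Pm M0 M1 ⟨hfin0, x0, C0, hx0, hC0, hcov0, hR0⟩ ⟨hfin1, x1, C1, hx1, hC1, hcov1, hR1⟩
    w0 w1 h
  have hM0 : IsRootedCluster M0 x0 C0 := ⟨hx0, hcov0, hR0⟩
  have hM1 : IsRootedCluster M1 x1 C1 := ⟨hx1, hcov1, hR1⟩
  let Z := {p : M0.W × M1.W // p.1 ∈ C0 ∧ p.2 ∈ C1 ∧ AtomArrow Pp Pm M0 p.1 M1 p.2}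
  have range0 : Set.range (fun p : Z => p.1.1) = C0 := by
    refine (Set.range_subset_iff.2 fun p => p.2.1).antisymm fun u hu => ?_
    obtain ⟨v, hv, huv⟩ := hM0.exists_atomArrow hM1 hC1 h hu
    exact ⟨⟨(u, v), hu, hv, huv⟩, rfl⟩
  have range1 : Set.range (fun p : Z => p.1.2) = C1 := by
    refine (Set.range_subset_iff.2 fun p => p.2.2.1).antisymm fun v hv => ?_
    obtain ⟨u, hu, hvu⟩ := hM1.exists_atomArrow hM0 hC0 h.swap hv
    exact ⟨⟨(u, v), hu, hv, hvu.swap⟩, rfl⟩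
  have : Nonempty Z := Set.range_nonempty_iff_nonempty.1 (range0 ▸ hC0)
  refine ⟨rootedClusterFrame Z, none, fun a => a.elim w0 (·.1.1), fun a => a.elim w1 (·.1.2),
    rootedClusterFrame_toModel_mem Z, hM0.pMorphism_elim w0 range0, hM1.pMorphism_elim w1 range1,
    rfl, rfl, ?_⟩
  rintro (_ | p)
  · exact h.mono (by norm_num)
  · exact p.2.2.2.modalArrow_zero
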